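/- arXiv:0806.0204 — 3 statements merged into one kernel-verified Lean document; each statement's English description precedes it below -/
import Mathlib

section
/- Suppose Ψ(x, y, λ) solves (∂_y − λ ∂_x) Ψ = (∂_x Q) Ψ with ∂_x Q valued in su(n), and the boundary value problem with Ψ → 1 as y → −∞ has a unique bounded solution for each λ ∈ ℂ \ ℝ. Then the reality condition Ψ(x, y, λ) · Ψ(x, y, λ̄)* = I holds, where * denotes conjugate transpose. -/
open Filter Matrix

attribute [local instance] Matrix.normedAddCommGroup Matrix.normedSpace

noncomputable section

/-- A bounded solution of the boundary value problem
`(∂_y − λ ∂_x) F = (∂_x Q) F`, `F → 1` as `y → −∞`. -/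
def IsBVPSol {n : ℕ} (lam : ℂ) (Qx : ℝ → ℝ → Matrix (Fin n) (Fin n) ℂ)
    (F : ℝ → ℝ → Matrix (Fin n) (Fin n) ℂ) : Prop :=
  (∀ y, Differentiable ℝ fun x => F x y) ∧
  (∀ x, Differentiable ℝ fun y => F x y) ∧
  (∀ x y, deriv (fun t => F x t) y - lam • deriv (fun s => F s y) x = Qx x y * F x y) ∧
  (∀ x, Tendsto (fun y => F x y) atBot (nhds 1)) ∧
  (∃ C : ℝ, ∀ x y, ‖F x y‖ ≤ C)

/-!
Write `B = Ψ(·,·,λ)` and `Φ = Ψ(·,·,λ̄)`. Since `∂_x Q` is skew-Hermitian, taking adjoints in the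
equation for `Φ` gives `(∂_y − λ ∂_x) Φᴴ = −Φᴴ ∂_x Q`, so by the Leibniz rule the sandwich
`B Φᴴ B` solves `(∂_y − λ ∂_x) F = (∂_x Q) F`; it is bounded and tends to `1` as `y → −∞`.
Uniqueness gives `B Φᴴ B = B`, and cancelling the invertible `B` leaves `B Φᴴ = 1`.
-/

section MatrixCalculus

variable {m : Type*} [Fintype m]

theorem HasDerivAt.matrix_mul {f g : ℝ → Matrix m m ℂ} {f' g' : Matrix m m ℂ} {t : ℝ}
    (hf : HasDerivAt f f' t) (hg : HasDerivAt g g' t) :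
    HasDerivAt (fun s => f s * g s) (f' * g t + f t * g') t := by
  rw [add_comm]
  exact (LinearMap.mul ℝ (Matrix m m ℂ)).toContinuousBilinearMap.hasDerivAt_of_bilinear
    (fun _ => hf) fun _ => hg

theorem deriv_matrix_mul {f g : ℝ → Matrix m m ℂ} {t : ℝ}
    (hf : DifferentiableAt ℝ f t) (hg : DifferentiableAt ℝ g t) :
    deriv (fun s => f s * g s) t = deriv f t * g t + f t * deriv g t :=
  (hf.hasDerivAt.matrix_mul hg.hasDerivAt).deriv

theorem Matrix.norm_mul_le_card_mul {l n α : Type*} [Fintype l] [Fintype n] [NormedRing α]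
    (A : Matrix l m α) (B : Matrix m n α) : ‖A * B‖ ≤ Fintype.card m * (‖A‖ * ‖B‖) := by
  refine (norm_le_iff (by positivity)).2 fun i j => ?_
  calc ‖(A * B) i j‖ ≤ ∑ k, ‖A i k‖ * ‖B k j‖ :=
        (norm_sum_le _ _).trans (Finset.sum_le_sum fun k _ => norm_mul_le _ _)
    _ ≤ ∑ _k : m, ‖A‖ * ‖B‖ := Finset.sum_le_sum fun k _ =>
        mul_le_mul (norm_entry_le_entrywise_sup_norm A) (norm_entry_le_entrywise_sup_norm B)
          (norm_nonneg _) (norm_nonneg _)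
    _ = Fintype.card m * (‖A‖ * ‖B‖) := by simp

theorem Matrix.norm_mul_le_card_mul_of_le {l n α : Type*} [Fintype l] [Fintype n] [NormedRing α]
    {A : Matrix l m α} {B : Matrix m n α} {a b : ℝ} (hA : ‖A‖ ≤ a) (hB : ‖B‖ ≤ b) :
    ‖A * B‖ ≤ Fintype.card m * (a * b) :=
  (norm_mul_le_card_mul A B).trans <| by
    gcongr
    exact (norm_nonneg A).trans hA

end MatrixCalculus

section TransportOperator

variable {m : Type*} [Fintype m]

/-- The operator `∂_y − λ ∂_x` applied to `F(x, y)`. -/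
def transportOp (lam : ℂ) (F : ℝ → ℝ → Matrix m m ℂ) (x y : ℝ) : Matrix m m ℂ :=
  deriv (fun t => F x t) y - lam • deriv (fun s => F s y) x

def SeparatelyDifferentiable (F : ℝ → ℝ → Matrix m m ℂ) : Prop :=
  (∀ y, Differentiable ℝ fun x => F x y) ∧ ∀ x, Differentiable ℝ fun y => F x y

variable {F G : ℝ → ℝ → Matrix m m ℂ}

theorem SeparatelyDifferentiable.mul (hF : SeparatelyDifferentiable F)
    (hG : SeparatelyDifferentiable G) : SeparatelyDifferentiable fun x y => F x y * G x y :=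
  ⟨fun y x => ((hF.1 y x).hasDerivAt.matrix_mul (hG.1 y x).hasDerivAt).differentiableAt,
    fun x y => ((hF.2 x y).hasDerivAt.matrix_mul (hG.2 x y).hasDerivAt).differentiableAt⟩

theorem SeparatelyDifferentiable.conjTranspose (hF : SeparatelyDifferentiable F) :
    SeparatelyDifferentiable fun x y => (F x y)ᴴ :=
  ⟨fun y => (hF.1 y).star, fun x => (hF.2 x).star⟩

theorem transportOp_mul (lam : ℂ) (hF : SeparatelyDifferentiable F)
    (hG : SeparatelyDifferentiable G) (x y : ℝ) :
    transportOp lam (fun x y => F x y * G x y) x y =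
      transportOp lam F x y * G x y + F x y * transportOp lam G x y := by
  simp only [transportOp, deriv_matrix_mul (hF.1 y x) (hG.1 y x),
    deriv_matrix_mul (hF.2 x y) (hG.2 x y), sub_mul, mul_sub, smul_add, Matrix.smul_mul,
    Matrix.mul_smul]
  abel

theorem deriv_conjTranspose (f : ℝ → Matrix m m ℂ) (t : ℝ) :
    deriv (fun s => (f s)ᴴ) t = (deriv f t)ᴴ :=
  deriv.star

theorem transportOp_conjTranspose (lam : ℂ) (F : ℝ → ℝ → Matrix m m ℂ) (x y : ℝ) :
    transportOp lam (fun x y => (F x y)ᴴ) x y = (transportOp (starRingEnd ℂ lam) F x y)ᴴ := by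
  simp only [transportOp, deriv_conjTranspose, conjTranspose_sub, conjTranspose_smul,
    Complex.star_def, Complex.conj_conj]

end TransportOperator

section BoundaryValueProblem

variable {n : ℕ} {lam : ℂ} {Qx B Φ : ℝ → ℝ → Matrix (Fin n) (Fin n) ℂ}

theorem IsBVPSol.of_transportOp (hd : SeparatelyDifferentiable B)
    (hpde : ∀ x y, transportOp lam B x y = Qx x y * B x y)
    (hlim : ∀ x, Tendsto (fun y => B x y) atBot (nhds 1)) (hbdd : ∃ C : ℝ, ∀ x y, ‖B x y‖ ≤ C) :
    IsBVPSol lam Qx B :=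
  ⟨hd.1, hd.2, hpde, hlim, hbdd⟩

theorem IsBVPSol.separatelyDifferentiable (h : IsBVPSol lam Qx B) :
    SeparatelyDifferentiable B :=
  ⟨h.1, h.2.1⟩

theorem IsBVPSol.transportOp_eq (h : IsBVPSol lam Qx B) (x y : ℝ) :
    transportOp lam B x y = Qx x y * B x y :=
  h.2.2.1 x y

theorem IsBVPSol.transportOp_conjTranspose (hskew : ∀ x y, (Qx x y)ᴴ = -Qx x y)
    (hΦ : IsBVPSol (starRingEnd ℂ lam) Qx Φ) (x y : ℝ) :
    transportOp lam (fun x y => (Φ x y)ᴴ) x y = -((Φ x y)ᴴ * Qx x y) := by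
  rw [_root_.transportOp_conjTranspose, hΦ.transportOp_eq, conjTranspose_mul, hskew,
    Matrix.mul_neg]

theorem IsBVPSol.mul_conjTranspose_mul (hskew : ∀ x y, (Qx x y)ᴴ = -Qx x y)
    (hB : IsBVPSol lam Qx B) (hΦ : IsBVPSol (starRingEnd ℂ lam) Qx Φ) :
    IsBVPSol lam Qx fun x y => B x y * (Φ x y)ᴴ * B x y := by
  have hBd := hB.separatelyDifferentiable
  have hΦd := hΦ.separatelyDifferentiable.conjTranspose
  refine .of_transportOp ((hBd.mul hΦd).mul hBd) (fun x y => ?_) (fun x => ?_) ?_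
  · rw [transportOp_mul lam (hBd.mul hΦd) hBd, transportOp_mul lam hBd hΦd,
      hB.transportOp_eq, hΦ.transportOp_conjTranspose hskew]
    noncomm_ring
  · obtain ⟨-, -, -, hBlim, -⟩ := hB
    obtain ⟨-, -, -, hΦlim, -⟩ := hΦ
    simpa [Matrix.star_eq_conjTranspose] using ((hBlim x).mul (hΦlim x).star).mul (hBlim x)
  · obtain ⟨-, -, -, -, CB, hCB⟩ := hB
    obtain ⟨-, -, -, -, CΦ, hCΦ⟩ := hΦ
    exact ⟨_, fun x y => norm_mul_le_card_mul_of_le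
      (norm_mul_le_card_mul_of_le (hCB x y) ((norm_conjTranspose _).trans_le (hCΦ x y)))
      (hCB x y)⟩

end BoundaryValueProblem

/-- Suppose `Ψ(x, y, λ)` solves `(∂_y − λ ∂_x)Ψ = (∂_x Q)Ψ` with `∂_x Q`
valued in `su(n)` (skew-Hermitian), `Ψ → 1` as `y → −∞`, each `Ψ(x,y,λ)` invertible, and
the boundary value problem has a unique bounded solution for each `λ ∈ ℂ \ ℝ`.  Then the
reality condition `Ψ(x, y, λ) · Ψ(x, y, λ̄)* = I` holds. -/
theorem reality_condition
    {n : ℕ} (Ψ : ℝ → ℝ → ℂ → Matrix (Fin n) (Fin n) ℂ)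
    (Qx : ℝ → ℝ → Matrix (Fin n) (Fin n) ℂ)
    (hskew : ∀ x y, (Qx x y)ᴴ = -Qx x y)
    (hΨinv : ∀ x y (lam : ℂ), lam.im ≠ 0 → IsUnit (Ψ x y lam))
    (hsol : ∀ lam : ℂ, lam.im ≠ 0 → IsBVPSol lam Qx (fun x y => Ψ x y lam))
    (huniq : ∀ lam : ℂ, lam.im ≠ 0 →
      ∀ F : ℝ → ℝ → Matrix (Fin n) (Fin n) ℂ,
        IsBVPSol lam Qx F → F = fun x y => Ψ x y lam) :
    ∀ (lam : ℂ), lam.im ≠ 0 →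
      ∀ x y : ℝ, Ψ x y lam * (Ψ x y (starRingEnd ℂ lam))ᴴ = 1 := by
  intro lam hlam x y
  have hconj : (starRingEnd ℂ lam).im ≠ 0 := by simpa using hlam
  have hsandwich := (hsol lam hlam).mul_conjTranspose_mul hskew (hsol _ hconj)
  have hfix : Ψ x y lam * (Ψ x y (starRingEnd ℂ lam))ᴴ * Ψ x y lam = 1 * Ψ x y lam :=
    (congrFun (congrFun (huniq lam hlam _ hsandwich) x) y).trans (one_mul _).symm
  exact (hΨinv x y lam hlam).mul_right_cancel hfix

end
end

section
/- Let d, n be n × n complex matrices with n invertible such that (d n^{-1})² = 0, and let α be invertible. If c, b are matrices satisfying b α d + c (β d + α n) = 0 for some matrix β, then automatically c α d = 0; that is, the first family of equations in the residue linear system is a consequence of the second whenever (d n^{-1})² = 0. -/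
/-!
Writing `M = N⁻¹`, nilpotency of `d M` gives `d M d = (d M)² N = 0`. The hypothesis says
`(c α) N = -(b α + c β) d`, so `c α d = (c α) N M d = -(b α + c β) (d M d) = 0`.
-/

open Matrix

section MonoidWithZero

variable {R : Type*} [MonoidWithZero R]

theorem mul_mul_eq_zero_of_mul_sq_eq_zero {d M N : R} (hMN : M * N = 1)
    (hsq : (d * M) ^ 2 = 0) : d * M * d = 0 :=
  calc d * M * d = (d * M) ^ 2 * N := by
        rw [sq, mul_assoc (d * M) (d * M), mul_assoc d M N, hMN, mul_one]
    _ = 0 := by rw [hsq, zero_mul]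

theorem mul_eq_zero_of_mul_eq_mul_of_mul_mul_eq_zero {u v d M N : R} (hNM : N * M = 1)
    (hd : d * M * d = 0) (huv : u * N = v * d) : u * d = 0 :=
  calc u * d = u * N * (M * d) := by rw [mul_assoc u N, ← mul_assoc N, hNM, one_mul]
    _ = v * (d * M * d) := by rw [huv]; simp only [mul_assoc]
    _ = 0 := by rw [hd, mul_zero]

end MonoidWithZero

theorem residue_first_equation_consequence_general
    {n : ℕ} (d N α β b c : Matrix (Fin n) (Fin n) ℂ)
    (hN : IsUnit N)
    (hnil : (d * N⁻¹) ^ 2 = 0)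
    (h : b * α * d + c * (β * d + α * N) = 0) :
    c * α * d = 0 := by
  have hdet : IsUnit N.det := (isUnit_iff_isUnit_det N).mp hN
  have hdNd : d * N⁻¹ * d = 0 :=
    mul_mul_eq_zero_of_mul_sq_eq_zero (nonsing_inv_mul N hdet) hnil
  have hcα : c * α * N = -(b * α + c * β) * d := by
    linear_combination (norm := noncomm_ring) h
  exact mul_eq_zero_of_mul_eq_mul_of_mul_mul_eq_zero (mul_nonsing_inv N hdet) hdNd hcα

/-- Let `d, N ∈ M_n(ℂ)` with `N` invertible and `(d N⁻¹)² = 0`, and let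
`α` be invertible.  If `b α d + c (β d + α N) = 0`, then automatically `c α d = 0`:
the first family of residue equations is a consequence of the second. -/
theorem residue_first_equation_consequence
    {n : ℕ} (d N α β b c : Matrix (Fin n) (Fin n) ℂ)
    (hN : IsUnit N) (hα : IsUnit α)
    (hnil : (d * N⁻¹) ^ 2 = 0)
    (h : b * α * d + c * (β * d + α * N) = 0) :
    c * α * d = 0 :=
  residue_first_equation_consequence_general d N α β b c hN hnil h
end

section
/- Let f : ℝ² × ℂ⁺ → M_n(ℂ) be given for Im λ > 0 by f(x, y, λ) = 1 + (1/(2πi)) ∫_ℝ F̃(t, λ)/(t − (x + λ y)) dt, where F̃(·, λ) ∈ L¹ ∩ L²(ℝ) uniformly with ‖F̃(·, λ)‖_{L¹∩L²} → 0 as |λ| → ∞, and suppose F̃(·, λ) is uniformly Hölder continuous in t. Then f(x, y, λ) → 1 uniformly in (x, y) as |λ| → ∞. -/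
/-! Put `p = Re z` for `z = x + λ y` and split the Cauchy integral at `|t - p| = r`. Away from `p`
the kernel is at most `1 / r`, so that part is at most `‖F̃‖_{L¹} / r`. Near `p` write
`F̃ t = (F̃ t - F̃ p) + F̃ p`: Hölder continuity makes the first term `O(|t - p| ^ (α - 1))`, which
contributes `O(r ^ α)`, while the kernel integrated over the symmetric interval has modulus at most
`2π`. Finally a Hölder function with small `L¹` norm is uniformly small, so for `r` small and then
`|λ|` large all three contributions are small, uniformly in `(x, y)`. -/

open Matrix Filter MeasureTheory Real

attribute [local instance] Matrix.normedAddCommGroup Matrix.normedSpace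

open Metric Set Topology

section Holder

variable {E : Type*} [NormedAddCommGroup E] {f : ℝ → E} {α C : ℝ}

theorem continuous_of_norm_sub_le_mul_rpow (hα : 0 < α)
    (hf : ∀ t s, ‖f t - f s‖ ≤ C * |t - s| ^ α) : Continuous f := by
  refine continuous_iff_continuousAt.2 fun s => tendsto_iff_norm_sub_tendsto_zero.2 ?_
  have hmaj : Tendsto (fun t : ℝ => C * |t - s| ^ α) (𝓝 s) (𝓝 0) := by
    have := (((continuous_id.sub (continuous_const (y := s))).abs.rpow_const
      fun _ => Or.inr hα.le).const_mul C).tendsto s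
    simpa [zero_rpow hα.ne'] using this
  exact squeeze_zero (fun _ => norm_nonneg _) (fun t => hf t s) hmaj

theorem integrable_of_norm_sub_le_mul_rpow (hα : 0 < α)
    (hf : ∀ t s, ‖f t - f s‖ ≤ C * |t - s| ^ α) (h1 : eLpNorm f 1 volume < ⊤) : Integrable f :=
  memLp_one_iff_integrable.1 ⟨(continuous_of_norm_sub_le_mul_rpow hα hf).aestronglyMeasurable, h1⟩

/-- On the ball of radius `δ = (‖f t₀‖ / (2 C)) ^ (1 / α)` about `t₀` the Hölder bound keeps `‖f‖`
above `‖f t₀‖ / 2`. -/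
theorem norm_mul_rpow_le_integral_norm (hα : 0 < α) (hC : 0 < C)
    (hf : ∀ t s, ‖f t - f s‖ ≤ C * |t - s| ^ α) (hfi : Integrable f) (t₀ : ℝ) :
    ‖f t₀‖ * (‖f t₀‖ / (2 * C)) ^ α⁻¹ ≤ ∫ t, ‖f t‖ := by
  set δ := (‖f t₀‖ / (2 * C)) ^ α⁻¹
  have hδ : 0 ≤ δ := by positivity
  have hδα : δ ^ α = ‖f t₀‖ / (2 * C) := rpow_inv_rpow (by positivity) hα.ne'
  have hlow : ∀ t ∈ closedBall t₀ δ, ‖f t₀‖ / 2 ≤ ‖f t‖ := by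
    intro t ht
    have hdist : |t₀ - t| ≤ δ := by rwa [abs_sub_comm, ← Real.dist_eq]
    calc ‖f t₀‖ / 2 = ‖f t₀‖ - C * δ ^ α := by rw [hδα]; field_simp; ring
      _ ≤ ‖f t₀‖ - ‖f t₀ - f t‖ := by gcongr; exact (hf t₀ t).trans (by gcongr)
      _ ≤ ‖f t‖ := by linarith [norm_sub_norm_le (f t₀) (f t)]
  calc ‖f t₀‖ * δ = ∫ _ in closedBall t₀ δ, ‖f t₀‖ / 2 := by
        rw [setIntegral_const, Real.volume_real_closedBall hδ, smul_eq_mul]; ring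
    _ ≤ ∫ t in closedBall t₀ δ, ‖f t‖ :=
        setIntegral_mono_on (integrableOn_const measure_closedBall_lt_top.ne) hfi.norm.integrableOn
          measurableSet_closedBall hlow
    _ ≤ ∫ t, ‖f t‖ := setIntegral_le_integral hfi.norm (ae_of_all _ fun _ => norm_nonneg _)

theorem exists_pos_forall_norm_le_of_integral_norm_le (hα : 0 < α) (hC : 0 ≤ C) {ε : ℝ}
    (hε : 0 < ε) : ∃ κ > 0, ∀ f : ℝ → E, (∀ t s, ‖f t - f s‖ ≤ C * |t - s| ^ α) →
      Integrable f → ∫ t, ‖f t‖ ≤ κ → ∀ t, ‖f t‖ ≤ ε := by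
  have hC' : 0 < C + 1 := by linarith
  refine ⟨ε * (ε / (2 * (C + 1))) ^ α⁻¹, by positivity, fun f hf hfi hκ t => ?_⟩
  by_contra! hlt
  have hf' : ∀ t s, ‖f t - f s‖ ≤ (C + 1) * |t - s| ^ α := fun t s =>
    (hf t s).trans (by gcongr; linarith)
  have hle := norm_mul_rpow_le_integral_norm hα hC' hf' hfi t
  have hlt' : ε * (ε / (2 * (C + 1))) ^ α⁻¹ < ‖f t‖ * (‖f t‖ / (2 * (C + 1))) ^ α⁻¹ := by
    gcongr
  linarith

end Holder

theorem intervalIntegrable_abs_rpow {β : ℝ} (hβ : -1 < β) (a b : ℝ) :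
    IntervalIntegrable (fun x : ℝ => |x| ^ β) volume a b := by
  refine intervalIntegrable_of_even (fun x => by rw [abs_neg]) fun x hx => ?_
  have := intervalIntegral.intervalIntegrable_rpow' hβ (a := 0) (b := x)
  rw [intervalIntegrable_iff_integrableOn_Ioc_of_le hx.le] at this ⊢
  exact this.congr_fun (fun t ht => by rw [abs_of_pos ht.1]) measurableSet_Ioc

theorem integral_abs_rpow {β : ℝ} (hβ : -1 < β) {r : ℝ} (hr : 0 ≤ r) :
    ∫ x in -r..r, |x| ^ β = 2 * r ^ (β + 1) / (β + 1) := by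
  have hhalf : ∫ x in (0 : ℝ)..r, |x| ^ β = r ^ (β + 1) / (β + 1) := by
    rw [intervalIntegral.integral_congr fun x hx => by
        rw [abs_of_nonneg (uIcc_of_le hr ▸ hx).1],
      integral_rpow (Or.inl hβ), zero_rpow (by linarith), sub_zero]
  have hneg : ∫ x in -r..0, |x| ^ β = ∫ x in (0 : ℝ)..r, |x| ^ β := by
    simpa [abs_neg] using (intervalIntegral.integral_comp_neg (a := 0) (b := r)
      fun x : ℝ => |x| ^ β).symm
  rw [← intervalIntegral.integral_add_adjacent_intervals (b := 0)
    (intervalIntegrable_abs_rpow hβ _ _) (intervalIntegrable_abs_rpow hβ _ _), hneg, hhalf]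
  ring

theorem abs_sub_re_le_norm_ofReal_sub (t : ℝ) (z : ℂ) : |t - z.re| ≤ ‖(t : ℂ) - z‖ := by
  simpa using Complex.abs_re_le_norm ((t : ℂ) - z)

theorem intervalIntegral_ofReal_inv_symm_eq_zero (r : ℝ) : ∫ t in -r..r, (t : ℂ)⁻¹ = 0 := by
  have h := intervalIntegral.integral_comp_neg (a := -r) (b := r) fun t : ℝ => (t : ℂ)⁻¹
  simp only [Complex.ofReal_neg, inv_neg, intervalIntegral.integral_neg, neg_neg] at h
  linear_combination -h / 2

/-- Off the real axis `log (t - z)` is a primitive whose real part takes equal values at the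
endpoints `z.re ± r`, so only the change of argument, at most `2π`, remains. -/
theorem norm_intervalIntegral_inv_ofReal_sub_le (z : ℂ) (r : ℝ) :
    ‖∫ t in z.re - r..z.re + r, ((t : ℂ) - z)⁻¹‖ ≤ 2 * π := by
  by_cases hz : z.im = 0
  · have hshift := intervalIntegral.integral_comp_sub_right (a := z.re - r) (b := z.re + r)
      (fun t : ℝ => (t : ℂ)⁻¹) z.re
    have hzre : (z.re : ℂ) = z := Complex.ext rfl (by simp [hz])
    simp only [sub_sub_cancel_left, add_sub_cancel_left, Complex.ofReal_sub, hzre] at hshift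
    rw [hshift, intervalIntegral_ofReal_inv_symm_eq_zero, norm_zero]
    positivity
  have hslit : ∀ t : ℝ, (t : ℂ) - z ∈ Complex.slitPlane := fun t =>
    Complex.mem_slitPlane_iff.2 (Or.inr (by simpa using hz))
  have hderiv : ∀ t ∈ uIcc (z.re - r) (z.re + r),
      HasDerivAt (fun t : ℝ => Complex.log ((t : ℂ) - z)) ((t : ℂ) - z)⁻¹ t := fun t _ => by
    simpa using (((hasDerivAt_id (t : ℂ)).sub_const z).clog (hslit t)).comp_ofReal
  have hint : IntervalIntegrable (fun t : ℝ => ((t : ℂ) - z)⁻¹) volume (z.re - r) (z.re + r) :=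
    ((Complex.continuous_ofReal.sub continuous_const).inv₀
      fun t => Complex.slitPlane_ne_zero (hslit t)).intervalIntegrable _ _
  rw [intervalIntegral.integral_eq_sub_of_hasDerivAt hderiv hint]
  set w₁ : ℂ := ((z.re + r : ℝ) : ℂ) - z
  set w₂ : ℂ := ((z.re - r : ℝ) : ℂ) - z
  have hnorm : ‖w₁‖ = ‖w₂‖ := by
    rw [Complex.norm_def, Complex.norm_def, Complex.normSq_apply, Complex.normSq_apply]
    simp only [w₁, w₂, Complex.sub_re, Complex.sub_im, Complex.ofReal_re, Complex.ofReal_im]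
    ring_nf
  calc ‖Complex.log w₁ - Complex.log w₂‖
      ≤ |(Complex.log w₁ - Complex.log w₂).re| + |(Complex.log w₁ - Complex.log w₂).im| :=
        Complex.norm_le_abs_re_add_abs_im _
    _ = |w₁.arg - w₂.arg| := by simp [Complex.log_re, Complex.log_im, hnorm]
    _ ≤ |w₁.arg| + |w₂.arg| := abs_sub _ _
    _ ≤ π + π := add_le_add (Complex.abs_arg_le_pi _) (Complex.abs_arg_le_pi _)
    _ = 2 * π := by ring

section CauchyIntegral

variable {E : Type*} [NormedAddCommGroup E] [NormedSpace ℂ E] {f : ℝ → E} {α C : ℝ}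

theorem norm_inv_ofReal_sub_smul_sub_le (hf : ∀ t s, ‖f t - f s‖ ≤ C * |t - s| ^ α) (hC : 0 ≤ C)
    (z : ℂ) (t : ℝ) :
    ‖((t : ℂ) - z)⁻¹ • (f t - f z.re)‖ ≤ C * |t - z.re| ^ (α - 1) := by
  rcases eq_or_ne t z.re with rfl | ht
  · simp only [sub_self, smul_zero, norm_zero]
    positivity
  have hpos : 0 < |t - z.re| := abs_pos.2 (sub_ne_zero.2 ht)
  calc ‖((t : ℂ) - z)⁻¹ • (f t - f z.re)‖ ≤ |t - z.re|⁻¹ * (C * |t - z.re| ^ α) := by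
        rw [norm_smul, norm_inv]
        gcongr
        · exact abs_sub_re_le_norm_ofReal_sub t z
        · exact hf t z.re
    _ = C * |t - z.re| ^ (α - 1) := by rw [rpow_sub_one hpos.ne']; field_simp

/-- Subtracting `f z.re` leaves an integrable singularity `|t - z.re| ^ (α - 1)`. -/
theorem norm_setIntegral_closedBall_inv_ofReal_sub_smul_le [CompleteSpace E] (hα : 0 < α)
    (hC : 0 ≤ C) (hf : ∀ t s, ‖f t - f s‖ ≤ C * |t - s| ^ α) (z : ℂ) {r : ℝ} (hr : 0 ≤ r) :
    ‖∫ t in closedBall z.re r, ((t : ℂ) - z)⁻¹ • f t‖ ≤ 2 * C / α * r ^ α + 2 * π * ‖f z.re‖ := by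
  set p := z.re
  by_cases hg : IntegrableOn (fun t : ℝ => ((t : ℂ) - z)⁻¹ • f t) (closedBall p r)
  swap
  · rw [integral_undef hg, norm_zero]
    positivity
  have hmaj : IntegrableOn (fun t => C * |t - p| ^ (α - 1)) (closedBall p r) := by
    have := ((intervalIntegrable_abs_rpow (β := α - 1) (by linarith) (-r) r).comp_sub_right
      p).const_mul C
    rw [neg_add_eq_sub, add_comm, intervalIntegrable_iff_integrableOn_Icc_of_le (by linarith),
      ← Real.closedBall_eq_Icc] at this
    exact this
  have hsing : IntegrableOn (fun t : ℝ => ((t : ℂ) - z)⁻¹ • (f t - f p)) (closedBall p r) :=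
    hmaj.mono' (((Complex.measurable_ofReal.sub_const z).inv.aestronglyMeasurable).smul
      ((continuous_of_norm_sub_le_mul_rpow hα hf).sub continuous_const).aestronglyMeasurable)
      (ae_of_all _ (norm_inv_ofReal_sub_smul_sub_le hf hC z))
  have hsplit : ∫ t in closedBall p r, ((t : ℂ) - z)⁻¹ • f t =
      (∫ t in closedBall p r, ((t : ℂ) - z)⁻¹ • (f t - f p)) +
        (∫ t in closedBall p r, ((t : ℂ) - z)⁻¹) • f p := by
    rw [← integral_smul_const]
    refine eq_add_of_sub_eq' ?_
    rw [← integral_sub hg hsing]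
    simp only [smul_sub, sub_sub_cancel]
  calc ‖∫ t in closedBall p r, ((t : ℂ) - z)⁻¹ • f t‖
      ≤ (∫ t in closedBall p r, C * |t - p| ^ (α - 1)) + 2 * π * ‖f p‖ := by
        rw [hsplit]
        refine (norm_add_le _ _).trans (add_le_add ?_ ?_)
        · exact norm_integral_le_of_norm_le hmaj
            (ae_of_all _ (norm_inv_ofReal_sub_smul_sub_le hf hC z))
        · rw [norm_smul, Real.closedBall_eq_Icc, integral_Icc_eq_integral_Ioc,
            ← intervalIntegral.integral_of_le (by linarith)]
          gcongr
          exact norm_intervalIntegral_inv_ofReal_sub_le z r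
    _ = 2 * C / α * r ^ α + 2 * π * ‖f p‖ := by
        have hshift := intervalIntegral.integral_comp_sub_right (a := p - r) (b := p + r)
          (fun s : ℝ => |s| ^ (α - 1)) p
        rw [Real.closedBall_eq_Icc, integral_Icc_eq_integral_Ioc,
          ← intervalIntegral.integral_of_le (by linarith), intervalIntegral.integral_const_mul,
          hshift, sub_sub_cancel_left, add_sub_cancel_left, integral_abs_rpow (by linarith) hr,
          sub_add_cancel]
        ring

theorem norm_setIntegral_compl_closedBall_inv_ofReal_sub_smul_le (hfi : Integrable f) (z : ℂ)
    {r : ℝ} (hr : 0 < r) :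
    ‖∫ t in (closedBall z.re r)ᶜ, ((t : ℂ) - z)⁻¹ • f t‖ ≤ r⁻¹ * ∫ t, ‖f t‖ := by
  have hker : ∀ t ∈ (closedBall z.re r)ᶜ, ‖((t : ℂ) - z)⁻¹ • f t‖ ≤ r⁻¹ * ‖f t‖ := by
    intro t ht
    have hrt : r < |t - z.re| := by simpa [Real.dist_eq] using ht
    rw [norm_smul, norm_inv]
    gcongr
    exact hrt.le.trans (abs_sub_re_le_norm_ofReal_sub t z)
  calc ‖∫ t in (closedBall z.re r)ᶜ, ((t : ℂ) - z)⁻¹ • f t‖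
      ≤ ∫ t in (closedBall z.re r)ᶜ, r⁻¹ * ‖f t‖ :=
        norm_integral_le_of_norm_le (hfi.norm.const_mul _).integrableOn
          ((ae_restrict_iff' measurableSet_closedBall.compl).2 (ae_of_all _ hker))
    _ ≤ ∫ t, r⁻¹ * ‖f t‖ :=
        setIntegral_le_integral (hfi.norm.const_mul _) (ae_of_all _ fun t => by positivity)
    _ = r⁻¹ * ∫ t, ‖f t‖ := integral_const_mul _ _

theorem norm_integral_inv_ofReal_sub_smul_le [CompleteSpace E] (hα : 0 < α) (hC : 0 ≤ C)
    (hf : ∀ t s, ‖f t - f s‖ ≤ C * |t - s| ^ α) (hfi : Integrable f) (z : ℂ) {r : ℝ}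
    (hr : 0 < r) :
    ‖∫ t : ℝ, ((t : ℂ) - z)⁻¹ • f t‖ ≤
      2 * C / α * r ^ α + 2 * π * ‖f z.re‖ + r⁻¹ * ∫ t, ‖f t‖ := by
  by_cases hg : Integrable fun t : ℝ => ((t : ℂ) - z)⁻¹ • f t
  swap
  · rw [integral_undef hg, norm_zero]
    have : 0 ≤ ∫ t, ‖f t‖ := integral_nonneg fun t => norm_nonneg _
    positivity
  rw [← integral_add_compl measurableSet_closedBall hg]
  exact (norm_add_le _ _).trans (add_le_add
    (norm_setIntegral_closedBall_inv_ofReal_sub_smul_le hα hC hf z hr.le)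
    (norm_setIntegral_compl_closedBall_inv_ofReal_sub_smul_le hfi z hr))

end CauchyIntegral

theorem integral_norm_le_of_eLpNorm_one_le {X E : Type*} [MeasurableSpace X] {μ : Measure X}
    [NormedAddCommGroup E] {f : X → E} (hf : Integrable f μ) {κ : ℝ} (hκ : 0 ≤ κ)
    (h : eLpNorm f 1 μ ≤ ENNReal.ofReal κ) : ∫ x, ‖f x‖ ∂μ ≤ κ := by
  rw [← ENNReal.ofReal_le_ofReal_iff hκ, ofReal_integral_norm_eq_lintegral_enorm hf,
    ← eLpNorm_one_eq_lintegral_enorm]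
  exact h

theorem exists_pos_mul_rpow_le (c : ℝ) {α ε : ℝ} (hα : 0 < α) (hε : 0 < ε) :
    ∃ r > 0, c * r ^ α ≤ ε := by
  have hlim : Tendsto (fun r : ℝ => c * r ^ α) (𝓝[>] 0) (𝓝 0) := by
    have := ((continuous_rpow_const hα.le).tendsto 0).const_mul c
    rw [zero_rpow hα.ne', mul_zero] at this
    exact tendsto_nhdsWithin_of_tendsto_nhds this
  obtain ⟨r, hrε, hr⟩ := ((hlim.eventually (ge_mem_nhds hε)).and self_mem_nhdsWithin).exists
  exact ⟨r, hr, hrε⟩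

theorem cauchy_integral_uniform_limit_general
    {n : ℕ} (F : ℝ → ℂ → Matrix (Fin n) (Fin n) ℂ)
    (hdecay : Tendsto
      (fun lam : ℂ =>
        eLpNorm (fun t => F t lam) 1 (volume : Measure ℝ) +
        eLpNorm (fun t => F t lam) 2 (volume : Measure ℝ))
      (cocompact ℂ) (nhds 0))
    (hHolder : ∃ (α Cα : ℝ), 0 < α ∧ α ≤ 1 ∧ 0 ≤ Cα ∧
      ∀ (lam : ℂ) (t s : ℝ), ‖F t lam - F s lam‖ ≤ Cα * |t - s| ^ α) :
    ∀ η : ℝ, 0 < η → ∃ R : ℝ, ∀ lam : ℂ, R ≤ ‖lam‖ → 0 < lam.im →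
      ∀ x y : ℝ,
        ‖(1 + (2 * π * Complex.I)⁻¹ •
            ∫ t : ℝ, ((t : ℂ) - ((x : ℂ) + lam * (y : ℂ)))⁻¹ • F t lam
          : Matrix (Fin n) (Fin n) ℂ) - 1‖ ≤ η := by
  obtain ⟨α, C, hα, -, hC, hHol⟩ := hHolder
  intro η hη
  obtain ⟨r, hr, hrη⟩ := exists_pos_mul_rpow_le (2 * C / α) hα (by positivity : 0 < η / 3)
  obtain ⟨κ, hκ, hsup⟩ := exists_pos_forall_norm_le_of_integral_norm_le
    (E := Matrix (Fin n) (Fin n) ℂ) hα hC (by positivity : 0 < η / (6 * π))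
  set κ' := min κ (r * η / 3)
  have hsmall : ∀ᶠ lam in Bornology.cobounded ℂ,
      eLpNorm (fun t => F t lam) 1 volume ≤ ENNReal.ofReal κ' := by
    rw [Metric.cobounded_eq_cocompact]
    exact (hdecay.eventually_lt_const (ENNReal.ofReal_pos.2 (by positivity))).mono fun lam h =>
      le_self_add.trans h.le
  obtain ⟨R, -, hR⟩ := hasBasis_cobounded_norm.eventually_iff.1 hsmall
  refine ⟨R, fun lam hlam _ x y => ?_⟩
  have hint :=
    integrable_of_norm_sub_le_mul_rpow hα (hHol lam) ((hR hlam).trans_lt ENNReal.ofReal_lt_top)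
  have hL1 := integral_norm_le_of_eLpNorm_one_le hint (by positivity) (hR hlam)
  have hfactor : ‖(2 * π * Complex.I)⁻¹‖ ≤ 1 := by
    rw [norm_inv, norm_mul, Complex.norm_I, mul_one, Complex.norm_mul, Complex.norm_real,
      Complex.norm_two, norm_of_nonneg pi_pos.le]
    exact inv_le_one_of_one_le₀ (by linarith [pi_gt_three])
  rw [add_sub_cancel_left, norm_smul]
  calc _ ≤ 1 * (η / 3 + 2 * π * (η / (6 * π)) + r⁻¹ * (r * η / 3)) := by
        gcongr
        refine (norm_integral_inv_ofReal_sub_smul_le hα hC (hHol lam) hint _ hr).trans ?_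
        gcongr
        · exact hsup _ (hHol lam) hint (hL1.trans (min_le_left _ _)) _
        · exact hL1.trans (min_le_right _ _)
    _ = η := by field_simp; ring

/-- Let `f(x, y, λ) = 1 + (1/(2πi)) ∫ F̃(t, λ)/(t − (x + λy)) dt` for
`Im λ > 0`, where `F̃(·, λ) ∈ L¹ ∩ L²(ℝ)` uniformly, `‖F̃(·, λ)‖_{L¹∩L²} → 0` as
`|λ| → ∞`, and `F̃(·, λ)` is uniformly Hölder continuous.  Then `f(x, y, λ) → 1`
uniformly in `(x, y)` as `|λ| → ∞`. -/
theorem cauchy_integral_uniform_limit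
    {n : ℕ} (F : ℝ → ℂ → Matrix (Fin n) (Fin n) ℂ)
    (hbound : ∃ M : ENNReal, M < ⊤ ∧ ∀ lam : ℂ,
      eLpNorm (fun t => F t lam) 1 (volume : Measure ℝ) ≤ M ∧
      eLpNorm (fun t => F t lam) 2 (volume : Measure ℝ) ≤ M)
    (hdecay : Tendsto
      (fun lam : ℂ =>
        eLpNorm (fun t => F t lam) 1 (volume : Measure ℝ) +
        eLpNorm (fun t => F t lam) 2 (volume : Measure ℝ))
      (cocompact ℂ) (nhds 0))
    (hHolder : ∃ (α Cα : ℝ), 0 < α ∧ α ≤ 1 ∧ 0 ≤ Cα ∧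
      ∀ (lam : ℂ) (t s : ℝ), ‖F t lam - F s lam‖ ≤ Cα * |t - s| ^ α) :
    ∀ η : ℝ, 0 < η → ∃ R : ℝ, ∀ lam : ℂ, R ≤ ‖lam‖ → 0 < lam.im →
      ∀ x y : ℝ,
        ‖(1 + (2 * π * Complex.I)⁻¹ •
            ∫ t : ℝ, ((t : ℂ) - ((x : ℂ) + lam * (y : ℂ)))⁻¹ • F t lam
          : Matrix (Fin n) (Fin n) ℂ) - 1‖ ≤ η :=
  cauchy_integral_uniform_limit_general F hdecay hHolder
end
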